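/- Let X be a connected locally finite partially ordered set and R a commutative ring with unity. Then the center of the incidence algebra I(X,R) consists exactly of the scalar multiples of the identity δ, i.e. Z(I(X,R)) = R·δ ≅ R. -/

import Mathlib

variable {X R : Type*} [PartialOrder X] [LocallyFiniteOrder X] [DecidableEq X] [CommRing R]

/-- Membership in the incidence algebra `I(X,R)`. -/
def IsInc (f : X → X → R) : Prop := ∀ x y : X, ¬ x ≤ y → f x y = 0

/-- The convolution product of the incidence algebra. -/
def conv (f g : X → X → R) : X → X → R :=
  fun x y => ∑ z ∈ Finset.Icc x y, f x z * g z y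

/-- The identity `δ` of `I(X,R)`. -/
def delta : X → X → R := fun x y => if x = y then 1 else 0

/-!
Commuting `c` with the matrix unit `single a b` (for `a ≤ b`) and evaluating at `(a, b)` gives
`c a a = c b b`; commuting with `single b b` gives `c a b = 0` for `a < b`. So `c` is diagonal,
with a diagonal that is constant along comparable pairs, hence constant on a connected `X`.
-/

def single (a b : X) : X → X → R := fun u v => if u = a ∧ v = b then 1 else 0

lemma isInc_single {X R : Type*} [PartialOrder X] [DecidableEq X] [CommRing R] {a b : X}
    (hab : a ≤ b) : IsInc (single a b : X → X → R) := by
  intro u v huv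
  refine if_neg ?_
  rintro ⟨rfl, rfl⟩
  exact huv hab

lemma conv_single_apply (c : X → X → R) {x a b : X} (hxa : x ≤ a) (hab : a ≤ b) :
    conv c (single a b) x b = c x a := by
  simp [conv, single, hxa, hab]

lemma single_conv_apply (c : X → X → R) {a b y : X} (hab : a ≤ b) (hby : b ≤ y) :
    conv (single a b) c a y = c b y := by
  simp [conv, single, hab, hby]

lemma single_conv_apply_of_ne (c : X → X → R) {a b x y : X} (hxa : x ≠ a) :
    conv (single a b) c x y = 0 := by
  simp [conv, single, hxa]

lemma smul_delta_conv (r : R) {f : X → X → R} (hf : IsInc f) : conv (r • delta) f = r • f := by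
  funext x y
  by_cases hxy : x ≤ y
  · simp [conv, delta, hxy]
  · simp [conv, Finset.Icc_eq_empty hxy, hf x y hxy]

lemma conv_smul_delta (r : R) {f : X → X → R} (hf : IsInc f) : conv f (r • delta) = r • f := by
  funext x y
  by_cases hxy : x ≤ y
  · simp [conv, delta, hxy, mul_comm]
  · simp [conv, Finset.Icc_eq_empty hxy, hf x y hxy]

def IsConvCentral (c : X → X → R) : Prop :=
  ∀ f : X → X → R, IsInc f → conv c f = conv f c

lemma apply_self_eq_of_le {c : X → X → R} (hcomm : IsConvCentral c) {a b : X} (hab : a ≤ b) :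
    c a a = c b b := by
  have h := congrFun₂ (hcomm _ (isInc_single (R := R) hab)) a b
  rwa [conv_single_apply c le_rfl hab, single_conv_apply c hab le_rfl] at h

lemma apply_eq_zero_of_ne {c : X → X → R} (hcomm : IsConvCentral c) {a b : X} (hab : a ≤ b)
    (hne : a ≠ b) : c a b = 0 := by
  have h := congrFun₂ (hcomm _ (isInc_single (R := R) (le_refl b))) a b
  rwa [conv_single_apply c hab le_rfl, single_conv_apply_of_ne c hne] at h

lemma apply_self_eq_of_reflTransGen {c : X → X → R} (hcomm : IsConvCentral c) {x y : X}
    (hxy : Relation.ReflTransGen (fun a b : X => a ≤ b ∨ b ≤ a) x y) : c x x = c y y := by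
  induction hxy with
  | refl => rfl
  | tail _ hle ih =>
    rcases hle with hle | hle
    · exact ih.trans (apply_self_eq_of_le hcomm hle)
    · exact ih.trans (apply_self_eq_of_le hcomm hle).symm

lemma eq_smul_delta {c : X → X → R} (hc : IsInc c) (hcomm : IsConvCentral c) {r : R}
    (hdiag : ∀ x, c x x = r) : c = r • delta := by
  funext x y
  by_cases hxy : x = y
  · subst hxy
    simp [delta, hdiag]
  · by_cases hle : x ≤ y
    · simp [delta, hxy, apply_eq_zero_of_ne hcomm hle hxy]
    · simp [delta, hxy, hc x y hle]

/-- if `X` is a connected locally finite poset, the center of `I(X,R)` is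
exactly `R·δ`. -/
theorem center_incidence_eq
    (hconn : ∀ x y : X, Relation.ReflTransGen (fun a b : X => a ≤ b ∨ b ≤ a) x y) :
    ∀ c : X → X → R,
      (IsInc c ∧ ∀ f : X → X → R, IsInc f → conv c f = conv f c) ↔
        ∃ r : R, c = r • (delta : X → X → R) := by
  intro c
  constructor
  · rintro ⟨hc, hcomm⟩
    rcases isEmpty_or_nonempty X with _ | ⟨⟨x₀⟩⟩
    · exact ⟨0, funext isEmptyElim⟩
    · exact ⟨c x₀ x₀, eq_smul_delta hc hcomm
        fun x => (apply_self_eq_of_reflTransGen hcomm (hconn x₀ x)).symm⟩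
  · rintro ⟨r, rfl⟩
    refine ⟨fun x y hxy => by simp [delta, ne_of_not_le hxy], fun f hf => ?_⟩
    rw [smul_delta_conv r hf, conv_smul_delta r hf]
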